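/- arXiv:2310.14762 — 2 statements merged into one kernel-verified Lean document; each statement's English description precedes it below -/
import Mathlib

section
/- Closed form of the diagonal Wu function: for every positive integer ℓ and 0 ≤ r ≤ 2, φ_{ℓ,ℓ}(r) := Γ(ℓ+1)² (2/π)^ℓ · (χ*χ)(rα) (self-convolution of the indicator of the unit ball in ℝ^{2ℓ+1} at a point of norm r) equals 2^{ℓ+1} Γ(ℓ+1) [ (1)_ℓ/(3/2)_ℓ − (r/2) · ₂F₁(−ℓ, 1/2; 3/2; r²/4) ]. -/
/-!
The integrand is the indicator of the lens `B(0,1) ∩ B(rα,1)`, so the convolution is its volume.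
A reflection moves `α` to the first basis vector `e₀`. Slicing perpendicular to `e₀`, the slice
at height `x` is a `2ℓ`-dimensional ball of squared radius `min (1 - x²) (1 - (x - r)²)`, and the
symmetry `x ↦ r - x` of the lens gives `(χ*χ)(rα) = 2 (π^ℓ/ℓ!) ∫_{r/2}^1 (1 - x²)^ℓ dx`.
Integrating the binomial expansion of `(1 - x²)^ℓ` termwise produces `t ₂F₁(-ℓ,1/2;3/2;t²)` as
`∫_0^t`, while `∫_0^1 (1 - x²)^ℓ = ½ ∫_0^π sin^(2ℓ+1)` is the Wallis product `(1)_ℓ/(3/2)_ℓ`.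
-/

open MeasureTheory Finset Polynomial Real Metric

theorem ascPochhammer_eval_eq_prod_range {R : Type*} [CommSemiring R] (n : ℕ) (r : R) :
    (ascPochhammer R n).eval r = ∏ j ∈ range n, (r + j) := by
  induction n with
  | zero => simp
  | succ n ih => rw [ascPochhammer_succ_eval, ih, prod_range_succ]

theorem ascPochhammer_eval_add_one_mul {R : Type*} [CommSemiring R] (n : ℕ) (r : R) :
    (ascPochhammer R n).eval (r + 1) * r = (ascPochhammer R n).eval r * (r + n) := by
  rw [← ascPochhammer_succ_eval, ascPochhammer_succ_left]
  simp [mul_comm]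

theorem hypergeometric_term_eq_choose (ℓ j : ℕ) (z : ℝ) :
    (ascPochhammer ℝ j).eval (-(ℓ : ℝ)) * (ascPochhammer ℝ j).eval (1 / 2)
        / (ascPochhammer ℝ j).eval (3 / 2) * z ^ j / j.factorial
      = (-1) ^ j * ℓ.choose j * z ^ j / (2 * j + 1) := by
  have h32 :
      (ascPochhammer ℝ j).eval (3 / 2) = (ascPochhammer ℝ j).eval (1 / 2) * (2 * j + 1) := by
    have := ascPochhammer_eval_add_one_mul j (1 / 2 : ℝ)
    rw [show (1 / 2 : ℝ) + 1 = 3 / 2 by norm_num] at this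
    linarith
  have h12 : (ascPochhammer ℝ j).eval (1 / 2) ≠ 0 := (ascPochhammer_pos j _ (by norm_num)).ne'
  rw [h32, ascPochhammer_eval_neg_eq_descPochhammer, descPochhammer_eval_eq_descFactorial,
    Nat.descFactorial_eq_factorial_mul_choose]
  have : (j.factorial : ℝ) ≠ 0 := by positivity
  push_cast
  field_simp

theorem integral_one_sub_sq_pow (ℓ : ℕ) (a b : ℝ) :
    ∫ x in a..b, (1 - x ^ 2) ^ ℓ = ∑ j ∈ range (ℓ + 1),
      (-1) ^ j * ℓ.choose j * (b ^ (2 * j + 1) - a ^ (2 * j + 1)) / (2 * j + 1) := by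
  have hexp (x : ℝ) :
      (1 - x ^ 2) ^ ℓ = ∑ j ∈ range (ℓ + 1), (-1) ^ j * ℓ.choose j * x ^ (2 * j) := by
    rw [sub_eq_neg_add, add_pow]
    refine sum_congr rfl fun j _ => ?_
    rw [neg_pow, pow_mul, one_pow, mul_one]
    ring
  simp_rw [hexp]
  rw [intervalIntegral.integral_finsetSum
    fun j _ => Continuous.intervalIntegrable (by fun_prop) _ _]
  refine sum_congr rfl fun j _ => ?_
  rw [intervalIntegral.integral_const_mul, integral_pow]
  push_cast
  ring

theorem integral_sin_pow_odd_eq_integral_one_sub_sq_pow (ℓ : ℕ) :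
    ∫ x in 0..π, sin x ^ (2 * ℓ + 1) = ∫ y in (-1)..1, (1 - y ^ 2) ^ ℓ := by
  have hderiv (x : ℝ) : HasDerivAt (fun x => -cos x) (sin x) x := by
    have := (hasDerivAt_cos x).neg
    rwa [neg_neg] at this
  have h := intervalIntegral.integral_comp_mul_deriv (a := 0) (b := π)
    (g := fun y => (1 - y ^ 2) ^ ℓ) (fun x _ => hderiv x) (by fun_prop) (by fun_prop)
  simp only [cos_zero, cos_pi, neg_neg] at h
  rw [← h]
  refine intervalIntegral.integral_congr fun x _ => ?_
  simp only [Function.comp, neg_sq, ← sin_sq]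
  ring

theorem integral_one_sub_sq_pow_zero_one (ℓ : ℕ) :
    ∫ x in 0..1, (1 - x ^ 2) ^ ℓ
      = (ascPochhammer ℝ ℓ).eval 1 / (ascPochhammer ℝ ℓ).eval (3 / 2) := by
  have hsym : ∫ y in (-1)..1, (1 - y ^ 2) ^ ℓ = 2 * ∫ x in 0..1, (1 - x ^ 2) ^ ℓ := by
    simp only [integral_one_sub_sq_pow, mul_sum]
    refine sum_congr rfl fun j _ => ?_
    rw [Odd.neg_one_pow ⟨j, rfl⟩]
    ring
  have hwallis := integral_sin_pow_odd (n := ℓ)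
  rw [integral_sin_pow_odd_eq_integral_one_sub_sq_pow, hsym,
    mul_right_inj' two_ne_zero] at hwallis
  rw [hwallis, ascPochhammer_eval_eq_prod_range, ascPochhammer_eval_eq_prod_range,
    ← prod_div_distrib]
  refine prod_congr rfl fun i _ => ?_
  field_simp
  ring

theorem integral_one_sub_sq_pow_eq_hypergeometric (ℓ : ℕ) (t : ℝ) :
    ∫ x in t..1, (1 - x ^ 2) ^ ℓ
      = (ascPochhammer ℝ ℓ).eval 1 / (ascPochhammer ℝ ℓ).eval (3 / 2)
        - t * ∑ j ∈ range (ℓ + 1),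
            ((ascPochhammer ℝ j).eval (-(ℓ : ℝ)) * (ascPochhammer ℝ j).eval (1 / 2)
              / (ascPochhammer ℝ j).eval (3 / 2)) * (t ^ 2) ^ j / j.factorial := by
  rw [← integral_one_sub_sq_pow_zero_one, integral_one_sub_sq_pow, integral_one_sub_sq_pow,
    mul_sum, ← sum_sub_distrib]
  refine sum_congr rfl fun j _ => ?_
  rw [hypergeometric_term_eq_choose, zero_pow (Nat.succ_ne_zero _)]
  ring

theorem integral_indicator_closedBall_mul_indicator_closedBall_sub {E : Type*}
    [SeminormedAddCommGroup E] [MeasurableSpace E] [OpensMeasurableSpace E] (μ : Measure E)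
    (v : E) (s t : ℝ) :
    ∫ z, (closedBall (0 : E) s).indicator (fun _ => (1 : ℝ)) z
        * (closedBall (0 : E) t).indicator (fun _ => (1 : ℝ)) (v - z) ∂μ
      = μ.real (closedBall 0 s ∩ closedBall v t) := by
  have hmem (z : E) : v - z ∈ closedBall 0 t ↔ z ∈ closedBall v t := by
    rw [mem_closedBall_zero_iff, mem_closedBall, dist_eq_norm, norm_sub_rev]
  have hind (z : E) : (closedBall (0 : E) t).indicator (fun _ => (1 : ℝ)) (v - z)
      = (closedBall v t).indicator 1 z := by
    by_cases hz : z ∈ closedBall v t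
    · simp [hz, (hmem z).2 hz]
    · simp [hz, mt (hmem z).1 hz]
  simp_rw [hind]
  rw [← integral_indicator_one (measurableSet_closedBall.inter measurableSet_closedBall),
    Set.inter_indicator_one]
  rfl

theorem volume_closedBall_inter_closedBall_of_norm_eq {F : Type*} [NormedAddCommGroup F]
    [InnerProductSpace ℝ F] [FiniteDimensional ℝ F] [MeasurableSpace F] [BorelSpace F]
    {u v : F} (h : ‖u‖ = ‖v‖) (s t : ℝ) :
    volume (closedBall (0 : F) s ∩ closedBall u t)
      = volume (closedBall (0 : F) s ∩ closedBall v t) := by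
  set R := (ℝ ∙ (u - v))ᗮ.reflection
  have hv : R.symm v = u := R.symm_apply_eq.2 (Submodule.reflection_sub h).symm
  have hpre : R ⁻¹' (closedBall 0 s ∩ closedBall v t) = closedBall 0 s ∩ closedBall u t := by
    rw [Set.preimage_inter, LinearIsometryEquiv.preimage_closedBall,
      LinearIsometryEquiv.preimage_closedBall, map_zero, hv]
  rw [← hpre, R.measurePreserving.measure_preimage
    (measurableSet_closedBall.inter measurableSet_closedBall).nullMeasurableSet]

theorem EuclideanSpace.volume_eq_lintegral_volume_cons {n : ℕ}
    {S : Set (EuclideanSpace ℝ (Fin (n + 1)))} (hS : MeasurableSet S) :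
    volume S
      = ∫⁻ x, volume {w : Fin n → ℝ | WithLp.toLp 2 (Fin.cons x w : Fin (n + 1) → ℝ) ∈ S} := by
  set e := MeasurableEquiv.piFinSuccAbove (fun _ : Fin (n + 1) => ℝ) 0
  have hS' : MeasurableSet (WithLp.toLp 2 ⁻¹' S) :=
    hS.preimage (PiLp.volume_preserving_toLp (Fin (n + 1))).measurable
  rw [← (PiLp.volume_preserving_toLp (Fin (n + 1))).measure_preimage hS.nullMeasurableSet,
    ← (volume_preserving_piFinSuccAbove (fun _ : Fin (n + 1) => ℝ) 0).symm.measure_preimage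
      hS'.nullMeasurableSet, Measure.volume_eq_prod,
    Measure.prod_apply (hS'.preimage e.symm.measurable)]
  refine lintegral_congr fun x => ?_
  congr 1
  ext w
  simp only [MeasurableEquiv.piFinSuccAbove_symm_apply, Fin.insertNthEquiv_zero, Set.mem_preimage,
    Set.mem_ofPred_eq, e]
  rfl

theorem EuclideanSpace.norm_sq_toLp_cons {n : ℕ} (x : ℝ) (w : Fin n → ℝ) :
    ‖WithLp.toLp 2 (Fin.cons x w : Fin (n + 1) → ℝ)‖ ^ 2 = x ^ 2 + ∑ i, w i ^ 2 := by
  rw [EuclideanSpace.real_norm_sq_eq, Fin.sum_univ_succ]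
  simp

theorem EuclideanSpace.toLp_cons_sub_smul_single {n : ℕ} (x r : ℝ) (w : Fin n → ℝ) :
    WithLp.toLp 2 (Fin.cons x w : Fin (n + 1) → ℝ) - r • EuclideanSpace.single 0 1
      = WithLp.toLp 2 (Fin.cons (x - r) w : Fin (n + 1) → ℝ) := by
  ext i
  refine Fin.cases ?_ (fun j => ?_) i <;> simp

theorem volume_setOf_sum_sq_le {n : ℕ} {c : ℝ} (hc : 0 ≤ c) :
    volume {w : Fin n → ℝ | ∑ i, w i ^ 2 ≤ c}
      = ENNReal.ofReal (√c ^ n) * volume (closedBall (0 : EuclideanSpace ℝ (Fin n)) 1) := by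
  have hpre : {w : Fin n → ℝ | ∑ i, w i ^ 2 ≤ c}
      = WithLp.toLp 2 ⁻¹' closedBall (0 : EuclideanSpace ℝ (Fin n)) √c := by
    ext w
    rw [Set.mem_preimage, mem_closedBall_zero_iff, ← sq_le_sq₀ (norm_nonneg _) (sqrt_nonneg _),
      EuclideanSpace.real_norm_sq_eq, sq_sqrt hc]
    rfl
  rw [hpre, (PiLp.volume_preserving_toLp (Fin n)).measure_preimage
    measurableSet_closedBall.nullMeasurableSet, Measure.addHaar_closedBall' _ _ (sqrt_nonneg c),
    finrank_euclideanSpace_fin]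

theorem integral_sqrt_min_one_sub_sq_pow {n : ℕ} {r : ℝ} (h0 : 0 ≤ r) (h2 : r ≤ 2) :
    ∫ x in (r - 1)..1, √(min (1 - x ^ 2) (1 - (x - r) ^ 2)) ^ n
      = 2 * ∫ x in (r / 2)..1, √(1 - x ^ 2) ^ n := by
  set f : ℝ → ℝ := fun x => √(min (1 - x ^ 2) (1 - (x - r) ^ 2)) ^ n
  have hf : Continuous f := by fun_prop
  have hsymm (x : ℝ) : f (r - x) = f x := by
    have h1 : (r - x) ^ 2 = (x - r) ^ 2 := by ring
    have h2 : (r - x - r) ^ 2 = x ^ 2 := by ring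
    simp only [f]
    rw [h1, h2, min_comm]
  have hright : ∫ x in (r / 2)..1, f x = ∫ x in (r / 2)..1, √(1 - x ^ 2) ^ n := by
    refine intervalIntegral.integral_congr fun x hx => ?_
    rw [Set.uIcc_of_le (by linarith)] at hx
    have hx' : 1 - x ^ 2 ≤ 1 - (x - r) ^ 2 := by nlinarith [hx.1]
    simp only [f]
    rw [min_eq_left hx']
  have hleft : ∫ x in (r - 1)..(r / 2), f x = ∫ x in (r / 2)..1, f x := by
    have h := intervalIntegral.integral_comp_sub_left f r (a := r - 1) (b := r / 2)
    simp only [hsymm, sub_sub_cancel, show r - r / 2 = r / 2 by ring] at h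
    exact h
  rw [← intervalIntegral.integral_add_adjacent_intervals (b := r / 2)
    (hf.intervalIntegrable _ _) (hf.intervalIntegrable _ _), hleft, hright]
  ring

theorem volume_closedBall_inter_closedBall_smul_single {n : ℕ} {r : ℝ} (h0 : 0 ≤ r)
    (h2 : r ≤ 2) :
    volume (closedBall (0 : EuclideanSpace ℝ (Fin (n + 1))) 1
        ∩ closedBall (r • EuclideanSpace.single 0 1) 1)
      = ENNReal.ofReal (∫ x in (r - 1)..1, √(min (1 - x ^ 2) (1 - (x - r) ^ 2)) ^ n)
          * volume (closedBall (0 : EuclideanSpace ℝ (Fin n)) 1) := by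
  set m : ℝ → ℝ := fun x => min (1 - x ^ 2) (1 - (x - r) ^ 2)
  have hslice (x : ℝ) : {w : Fin n → ℝ | WithLp.toLp 2 (Fin.cons x w : Fin (n + 1) → ℝ) ∈
      closedBall 0 1 ∩ closedBall (r • EuclideanSpace.single 0 1) 1}
      = {w | ∑ i, w i ^ 2 ≤ m x} := by
    ext w
    simp only [Set.mem_ofPred_eq, Set.mem_inter_iff, mem_closedBall_iff_norm, sub_zero,
      EuclideanSpace.toLp_cons_sub_smul_single, ← sq_le_one_iff₀ (norm_nonneg _),
      EuclideanSpace.norm_sq_toLp_cons, m, le_min_iff]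
    constructor <;> rintro ⟨h, h'⟩ <;> constructor <;> linarith
  have hm_neg (x : ℝ) (hx : x ∉ Set.Icc (r - 1) 1) : m x < 0 := by
    simp only [Set.mem_Icc, not_and_or, not_le] at hx
    rcases hx with hx | hx
    · exact (min_le_right _ _).trans_lt (by nlinarith)
    · exact (min_le_left _ _).trans_lt (by nlinarith)
  have hm_nonneg (x : ℝ) (hx : x ∈ Set.Icc (r - 1) 1) : 0 ≤ m x :=
    le_min (by nlinarith [hx.1, hx.2]) (by nlinarith [hx.1, hx.2])
  have hsupp :
      (fun x => volume {w : Fin n → ℝ | ∑ i, w i ^ 2 ≤ m x}).support ⊆ Set.Icc (r - 1) 1 := by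
    refine Function.support_subset_iff'.2 fun x hx => ?_
    have hempty : {w : Fin n → ℝ | ∑ i, w i ^ 2 ≤ m x} = ∅ :=
      Set.eq_empty_of_forall_notMem fun w hw =>
        (hm_neg x hx).not_ge ((sum_nonneg fun i _ => sq_nonneg (w i)).trans hw)
    rw [hempty, measure_empty]
  have hf : Continuous fun x => √(m x) ^ n := by fun_prop
  rw [EuclideanSpace.volume_eq_lintegral_volume_cons
      (measurableSet_closedBall.inter measurableSet_closedBall)]
  simp_rw [hslice]
  rw [← setLIntegral_eq_of_support_subset hsupp,
    setLIntegral_congr_fun measurableSet_Icc fun x hx => volume_setOf_sum_sq_le (hm_nonneg x hx),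
    lintegral_mul_const _ (by fun_prop : Measurable fun x => ENNReal.ofReal (√(m x) ^ n)),
    ← ofReal_integral_eq_lintegral_ofReal (hf.integrableOn_Icc)
      (Filter.Eventually.of_forall fun x => by positivity),
    integral_Icc_eq_integral_Ioc, ← intervalIntegral.integral_of_le (by linarith)]

theorem measureReal_closedBall_inter_closedBall_smul_single {n : ℕ} {r : ℝ} (h0 : 0 ≤ r)
    (h2 : r ≤ 2) :
    volume.real (closedBall (0 : EuclideanSpace ℝ (Fin (n + 1))) 1
        ∩ closedBall (r • EuclideanSpace.single 0 1) 1)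
      = 2 * volume.real (closedBall (0 : EuclideanSpace ℝ (Fin n)) 1)
          * ∫ x in (r / 2)..1, √(1 - x ^ 2) ^ n := by
  rw [measureReal_def, volume_closedBall_inter_closedBall_smul_single h0 h2, ENNReal.toReal_mul,
    ← measureReal_def,
    ENNReal.toReal_ofReal (intervalIntegral.integral_nonneg (by linarith) fun x _ => by positivity),
    integral_sqrt_min_one_sub_sq_pow h0 h2]
  ring

theorem EuclideanSpace.measureReal_closedBall_fin_two_mul (ℓ : ℕ) :
    volume.real (closedBall (0 : EuclideanSpace ℝ (Fin (2 * ℓ))) 1) = π ^ ℓ / ℓ.factorial := by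
  rcases ℓ.eq_zero_or_pos with rfl | hℓ
  · simp [measureReal_def, volume_euclideanSpace_eq_dirac]
  · have : Nonempty (Fin (2 * ℓ)) := ⟨⟨0, by omega⟩⟩
    rw [measureReal_def, InnerProductSpace.volume_closedBall_of_dim_even (k := ℓ)
      finrank_euclideanSpace_fin]
    simp [div_nonneg, pi_nonneg]

theorem closed_form_diagonal_wu_general (ℓ : ℕ)
    (α : EuclideanSpace ℝ (Fin (2 * ℓ + 1))) (hα : ‖α‖ = 1)
    (r : ℝ) (h0 : 0 ≤ r) (h2 : r ≤ 2) :
    Real.Gamma ((ℓ : ℝ) + 1) ^ 2 * (2 / Real.pi) ^ ℓ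
        * (∫ z : EuclideanSpace ℝ (Fin (2 * ℓ + 1)),
            (Metric.closedBall (0 : EuclideanSpace ℝ (Fin (2 * ℓ + 1))) 1).indicator
                (fun _ => (1 : ℝ)) z
              * (Metric.closedBall (0 : EuclideanSpace ℝ (Fin (2 * ℓ + 1))) 1).indicator
                (fun _ => (1 : ℝ)) (r • α - z))
      = 2 ^ (ℓ + 1) * Real.Gamma ((ℓ : ℝ) + 1)
          * ((ascPochhammer ℝ ℓ).eval 1 / (ascPochhammer ℝ ℓ).eval (3 / 2)
            - r / 2 * ∑ j ∈ range (ℓ + 1),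
                ((ascPochhammer ℝ j).eval (-(ℓ : ℝ)) * (ascPochhammer ℝ j).eval (1 / 2)
                  / (ascPochhammer ℝ j).eval (3 / 2)) * (r ^ 2 / 4) ^ j
                  / (Nat.factorial j)) := by
  have hnorm : ‖r • α‖ = ‖r • EuclideanSpace.single (0 : Fin (2 * ℓ + 1)) (1 : ℝ)‖ := by
    simp [norm_smul, hα]
  have hpow :
      ∫ x in (r / 2)..1, √(1 - x ^ 2) ^ (2 * ℓ) = ∫ x in (r / 2)..1, (1 - x ^ 2) ^ ℓ := by
    refine intervalIntegral.integral_congr fun x hx => ?_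
    rw [Set.uIcc_of_le (by linarith)] at hx
    rw [pow_mul, sq_sqrt (by nlinarith [hx.1, hx.2])]
  rw [integral_indicator_closedBall_mul_indicator_closedBall_sub, measureReal_def,
    volume_closedBall_inter_closedBall_of_norm_eq hnorm, ← measureReal_def,
    measureReal_closedBall_inter_closedBall_smul_single h0 h2,
    EuclideanSpace.measureReal_closedBall_fin_two_mul, hpow,
    integral_one_sub_sq_pow_eq_hypergeometric, show (r / 2) ^ 2 = r ^ 2 / 4 by ring,
    Gamma_nat_eq_factorial, div_pow 2 π]
  field_simp
  ring

/-- Closed form of the diagonal Wu function: for `ℓ ≥ 1`, a unit vector `α`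
in `ℝ^{2ℓ+1}` and `0 ≤ r ≤ 2`,
`φ_{ℓ,ℓ}(r) = Γ(ℓ+1)² (2/π)^ℓ (χ*χ)(rα)
  = 2^{ℓ+1} Γ(ℓ+1) [ (1)_ℓ/(3/2)_ℓ − (r/2) ₂F₁(−ℓ,1/2;3/2;r²/4) ]`. -/
theorem closed_form_diagonal_wu (ℓ : ℕ) (hℓ : 1 ≤ ℓ)
    (α : EuclideanSpace ℝ (Fin (2 * ℓ + 1))) (hα : ‖α‖ = 1)
    (r : ℝ) (h0 : 0 ≤ r) (h2 : r ≤ 2) :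
    Real.Gamma ((ℓ : ℝ) + 1) ^ 2 * (2 / Real.pi) ^ ℓ
        * (∫ z : EuclideanSpace ℝ (Fin (2 * ℓ + 1)),
            (Metric.closedBall (0 : EuclideanSpace ℝ (Fin (2 * ℓ + 1))) 1).indicator
                (fun _ => (1 : ℝ)) z
              * (Metric.closedBall (0 : EuclideanSpace ℝ (Fin (2 * ℓ + 1))) 1).indicator
                (fun _ => (1 : ℝ)) (r • α - z))
      = 2 ^ (ℓ + 1) * Real.Gamma ((ℓ : ℝ) + 1)
          * ((ascPochhammer ℝ ℓ).eval 1 / (ascPochhammer ℝ ℓ).eval (3 / 2)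
            - r / 2 * ∑ j ∈ range (ℓ + 1),
                ((ascPochhammer ℝ j).eval (-(ℓ : ℝ)) * (ascPochhammer ℝ j).eval (1 / 2)
                  / (ascPochhammer ℝ j).eval (3 / 2)) * (r ^ 2 / 4) ^ j
                  / (Nat.factorial j)) :=
  closed_form_diagonal_wu_general ℓ α hα r h0 h2
end

section
/- The Wu functions are linear combinations of generalized Wendland functions in the diagonal case k = ℓ: for every positive integer ℓ and 0 ≤ r ≤ 1, φ_{ℓ,ℓ}(2r) = 2^{ℓ+1} Γ(ℓ+1) Σ_{n=0}^{ℓ} binom(ℓ,n) [2^{ℓ-n}(-1)^n/(ℓ+n+1)] (1-r)^{ℓ+n+1}, where φ_{ℓ,ℓ}(2r) = 2^{ℓ+1} Γ(ℓ+1) ∫_r^1 (1-x²)^ℓ dx. -/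
open Finset intervalIntegral

/-- The diagonal Wu function is a linear combination of Wendland functions
`ψ^{wd}_{ℓ+n+1,0}(r) = (1-r)^{ℓ+n+1}`: for `ℓ ≥ 1` and `0 ≤ r ≤ 1`,
`φ_{ℓ,ℓ}(2r) = 2^{ℓ+1} Γ(ℓ+1) ∫_r^1 (1-x²)^ℓ dx
  = 2^{ℓ+1} Γ(ℓ+1) Σ_{n=0}^{ℓ} binom(ℓ,n) 2^{ℓ-n}(-1)^n/(ℓ+n+1) (1-r)^{ℓ+n+1}`. -/
theorem wu_eq_comb_wendland (ℓ : ℕ) (hℓ : 1 ≤ ℓ) (r : ℝ)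
    (h0 : 0 ≤ r) (h1 : r ≤ 1) :
    2 ^ (ℓ + 1) * Real.Gamma ((ℓ : ℝ) + 1) * ∫ x in r..1, (1 - x ^ 2) ^ ℓ
      = 2 ^ (ℓ + 1) * Real.Gamma ((ℓ : ℝ) + 1)
          * ∑ n ∈ range (ℓ + 1),
              (ℓ.choose n : ℝ) * (2 ^ (ℓ - n) * (-1) ^ n / ((ℓ : ℝ) + n + 1))
                * (1 - r) ^ (ℓ + n + 1) := by
  congr 1
  have key : ∀ x : ℝ, (1 - x ^ 2) ^ ℓ
      = ∑ n ∈ range (ℓ + 1),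
          (ℓ.choose n : ℝ) * (2 ^ (ℓ - n) * (-1) ^ n) * (1 - x) ^ (ℓ + n) := by
    intro x
    have h2 : (1 : ℝ) - x ^ 2 = (1 - x) * (1 + x) := by ring
    have h3 : (1 : ℝ) + x = -(1 - x) + 2 := by ring
    rw [h2, mul_pow, h3, add_pow]
    rw [Finset.mul_sum]
    refine Finset.sum_congr rfl fun n hn => ?_
    rw [neg_pow]
    ring
  rw [intervalIntegral.integral_congr (g := fun x => ∑ n ∈ range (ℓ + 1),
      (ℓ.choose n : ℝ) * (2 ^ (ℓ - n) * (-1) ^ n) * (1 - x) ^ (ℓ + n))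
      (fun x _ => key x)]
  rw [intervalIntegral.integral_finset_sum (fun n _ => (Continuous.intervalIntegrable (by continuity) _ _))]
  refine Finset.sum_congr rfl fun n hn => ?_
  rw [intervalIntegral.integral_const_mul]
  have : ∫ x in r..1, (1 - x) ^ (ℓ + n) = (1 - r) ^ (ℓ + n + 1) / ((ℓ : ℝ) + n + 1) := by
    have := intervalIntegral.integral_comp_sub_left (a := r) (b := 1)
      (fun x => x ^ (ℓ + n)) 1
    rw [this]
    rw [integral_pow]
    push_cast
    ring_nf
  rw [this]
  ring
end
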